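/- If S is an additive numerical semigroup with multiplicity e whose blowup B is symmetric, then d_max(S) = d(F(B) + e; D), the denumerant of F(B) + e in B with respect to the generating set D = {e, a₁−e, …, a_t−e}. -/

import Mathlib

/-!
Write `e = g 0`, `B` for the blowup and `w = F(B) + e`. Since `aᵢ = (aᵢ - e) + e`, a factorization
of `n` over `g` of length `ℓ` is, off its `e`-coordinate, a factorization of `n - ℓ e` over `D`.
Hence the maximal-length factorizations of `n` inject into the factorizations of `adj n` over `D`.
Additivity forces `adj n ∈ Ap(B, e)`: otherwise padding with copies of `e` would give
`n + k e` a factorization longer than `ord n + k`. Symmetry then puts `w - adj n` in `B`, and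
adding one fixed factorization of it injects the maximal factorizations of `n` into those of `w`.
Conversely `w ∈ Ap(B, e)`, so `w e + w` has order `w` and every factorization of `w` over `D`
lifts to a maximal factorization of `w e + w`; this realizes the bound.
-/

open Finset

/-- The set of factorizations of `n` over the generating tuple `g`. -/
def Fac {t : ℕ} (g : Fin (t + 1) → ℕ) (n : ℕ) : Set (Fin (t + 1) → ℕ) :=
  {c | ∑ i, c i * g i = n}

/-- The numerical semigroup generated by the tuple `g`. -/
def Sg {t : ℕ} (g : Fin (t + 1) → ℕ) : Set ℕ :=
  {n | ∃ c : Fin (t + 1) → ℕ, ∑ i, c i * g i = n}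

/-- The order of `n`: the maximal length of a factorization of `n` over `g`. -/
noncomputable def ordOf {t : ℕ} (g : Fin (t + 1) → ℕ) (n : ℕ) : ℕ :=
  sSup {r | ∃ c ∈ Fac g n, ∑ i, c i = r}

/-- The minimal length of a factorization of `n` over `g`. -/
noncomputable def minordOf {t : ℕ} (g : Fin (t + 1) → ℕ) (n : ℕ) : ℕ :=
  sInf {r | ∃ c ∈ Fac g n, ∑ i, c i = r}

/-- The denumerant of `n` with respect to `g`. -/
noncomputable def denum {t : ℕ} (g : Fin (t + 1) → ℕ) (n : ℕ) : ℕ :=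
  (Fac g n).ncard

/-- The maximal denumerant of an element: the number of maximal-length factorizations. -/
noncomputable def dmaxEl {t : ℕ} (g : Fin (t + 1) → ℕ) (n : ℕ) : ℕ :=
  {c ∈ Fac g n | ∑ i, c i = ordOf g n}.ncard

/-- The maximal denumerant of the semigroup generated by `g`. -/
noncomputable def dmax {t : ℕ} (g : Fin (t + 1) → ℕ) : ℕ :=
  sSup {m | ∃ n ∈ Sg g, dmaxEl g n = m}

/-- The generating tuple `D` of the blowup: `{e, a₁ - e, …, a_t - e}`. -/
def blowD {t : ℕ} (g : Fin (t + 1) → ℕ) : Fin (t + 1) → ℕ :=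
  fun i => if i = 0 then g 0 else g i - g 0

/-- The adjustment of `n`:  `n - ord(n) * e`. -/
noncomputable def adj {t : ℕ} (g : Fin (t + 1) → ℕ) (n : ℕ) : ℕ :=
  n - ordOf g n * g 0

/-- The Apery set with respect to `u` of the semigroup generated by `g`. -/
def Ap {t : ℕ} (g : Fin (t + 1) → ℕ) (u : ℕ) : Set ℕ :=
  {w ∈ Sg g | ¬ ∃ b ∈ Sg g, w = b + u}

/-- `g` is the (strictly increasing) minimal generating tuple of a numerical semigroup
with multiplicity `g 0`. -/
structure IsNumSgp {t : ℕ} (g : Fin (t + 1) → ℕ) : Prop where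
  mono : StrictMono g
  pos : 0 < g 0
  gcd_eq_one : Finset.gcd Finset.univ g = 1
  minimal : ∀ i, ∀ c : Fin (t + 1) → ℕ, ∑ j, c j * g j = g i → c = Pi.single i 1

/-- `S` is additive: `ord(u + e) = ord(u) + 1` for all `u ∈ S`. -/
def IsAdditive {t : ℕ} (g : Fin (t + 1) → ℕ) : Prop :=
  ∀ u ∈ Sg g, ordOf g (u + g 0) = ordOf g u + 1

/-- Membership of an integer in a set of naturals. -/
def ZMem (T : Set ℕ) (z : ℤ) : Prop := 0 ≤ z ∧ z.toNat ∈ T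

/-- The Frobenius number: the largest integer not in `T`. -/
noncomputable def Frob (T : Set ℕ) : ℤ := sSup {z : ℤ | ¬ ZMem T z}

/-- `T` is symmetric: whenever `x + y = F(T)`, exactly one of `x`, `y` lies in `T`. -/
def Symm (T : Set ℕ) : Prop := ∀ x y : ℤ, x + y = Frob T → (ZMem T x ↔ ¬ ZMem T y)

/-- An abstract numerical semigroup. -/
structure IsNumSemigroup (T : Set ℕ) : Prop where
  zero_mem : 0 ∈ T
  add_mem : ∀ a ∈ T, ∀ b ∈ T, a + b ∈ T
  cofinite : Tᶜ.Finite

/-- The Apery set of an abstract numerical semigroup. -/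
def ApS (T : Set ℕ) (u : ℕ) : Set ℕ := {w ∈ T | ¬ ∃ b ∈ T, w = b + u}

theorem sum_update_mul_add {ι : Type*} [Fintype ι] [DecidableEq ι] (c w : ι → ℕ) (i : ι)
    (x : ℕ) : ∑ j, Function.update c i x j * w j + c i * w i = x * w i + ∑ j, c j * w j := by
  rw [← add_sum_erase _ _ (mem_univ i), ← add_sum_erase _ (fun j => c j * w j) (mem_univ i),
    Function.update_self, sum_congr rfl fun j hj => by rw [Function.update_of_ne (ne_of_mem_erase hj)]]
  ring

theorem sum_add_single_mul {ι : Type*} [Fintype ι] [DecidableEq ι] (c w : ι → ℕ) (i : ι)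
    (k : ℕ) : ∑ j, (c + Pi.single i k : ι → ℕ) j * w j = ∑ j, c j * w j + k * w i := by
  simp [add_mul, sum_add_distrib, Pi.single_apply]

section Factorizations

variable {t : ℕ} {g : Fin (t + 1) → ℕ} {n : ℕ} {c : Fin (t + 1) → ℕ}

theorem zero_mem_Sg (g : Fin (t + 1) → ℕ) : 0 ∈ Sg g := ⟨0, by simp⟩

theorem add_mul_mem_Sg (hn : n ∈ Sg g) (i : Fin (t + 1)) (k : ℕ) : n + k * g i ∈ Sg g := by
  obtain ⟨c, rfl⟩ := hn
  exact ⟨c + Pi.single i k, sum_add_single_mul c g i k⟩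

theorem sum_le_of_mem_Fac (hg : ∀ i, 0 < g i) (hc : c ∈ Fac g n) : ∑ i, c i ≤ n :=
  hc ▸ sum_le_sum fun i _ => Nat.le_mul_of_pos_right _ (hg i)

theorem finite_Fac (hg : ∀ i, 0 < g i) (n : ℕ) : (Fac g n).Finite :=
  (Set.Finite.pi' fun _ => Set.finite_Iic n).subset fun c hc i =>
    (single_le_sum (fun j _ => Nat.zero_le (c j)) (mem_univ i)).trans (sum_le_of_mem_Fac hg hc)

theorem bddAbove_lengths (hg : ∀ i, 0 < g i) (n : ℕ) :
    BddAbove {r | ∃ c ∈ Fac g n, ∑ i, c i = r} :=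
  ⟨n, by rintro _ ⟨c, hc, rfl⟩; exact sum_le_of_mem_Fac hg hc⟩

theorem sum_le_ordOf (hg : ∀ i, 0 < g i) (hc : c ∈ Fac g n) : ∑ i, c i ≤ ordOf g n :=
  le_csSup (bddAbove_lengths hg n) ⟨c, hc, rfl⟩

theorem exists_mem_Fac_sum_eq_ordOf (hg : ∀ i, 0 < g i) (hn : n ∈ Sg g) :
    ∃ c ∈ Fac g n, ∑ i, c i = ordOf g n := by
  obtain ⟨c, hc⟩ := hn
  exact Nat.sSup_mem (s := {r | ∃ c ∈ Fac g n, ∑ i, c i = r}) ⟨_, c, hc, rfl⟩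
    (bddAbove_lengths hg n)

theorem ordOf_add_mul (hadd : IsAdditive g) (hn : n ∈ Sg g) (k : ℕ) :
    ordOf g (n + k * g 0) = ordOf g n + k := by
  induction k with
  | zero => simp
  | succ k ih => rw [add_one_mul, ← add_assoc, hadd _ (add_mul_mem_Sg hn 0 k), ih, add_assoc]

theorem eq_zero_of_mem_Ap {i : Fin (t + 1)} (hn : n ∈ Ap g (g i)) (hc : c ∈ Fac g n) :
    c i = 0 := by
  by_contra hci
  obtain ⟨k, hk⟩ := Nat.exists_eq_add_of_lt (Nat.pos_of_ne_zero hci)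
  refine hn.2 ⟨_, ⟨Function.update c i k, rfl⟩, ?_⟩
  have := sum_update_mul_add c g i k
  rw [hc, hk] at this
  linarith

end Factorizations

section Blowup

variable {t : ℕ} {g : Fin (t + 1) → ℕ} {n w : ℕ} {b c : Fin (t + 1) → ℕ}

@[simp] theorem blowD_zero (g : Fin (t + 1) → ℕ) : blowD g 0 = g 0 := if_pos rfl

theorem blowD_pos (hg : StrictMono g) (he : 0 < g 0) (i : Fin (t + 1)) : 0 < blowD g i := by
  rcases eq_or_ne i 0 with rfl | hi
  · simpa using he
  · simpa [blowD, hi] using hg (Fin.pos_of_ne_zero hi)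

theorem pos_of_monotone (hg : Monotone g) (he : 0 < g 0) (i : Fin (t + 1)) : 0 < g i :=
  he.trans_le (hg (Fin.zero_le i))

theorem sum_mul_add_eq_sum_mul_blowD (hg : Monotone g) (c : Fin (t + 1) → ℕ) :
    ∑ i, c i * g i + c 0 * g 0 = ∑ i, c i * blowD g i + (∑ i, c i) * g 0 := by
  rw [sum_mul, ← add_sum_erase _ (fun i => c i * g i) (mem_univ 0),
    ← add_sum_erase _ (fun i => c i * blowD g i) (mem_univ 0),
    ← add_sum_erase _ (fun i => c i * g 0) (mem_univ 0), blowD_zero]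
  have : ∑ i ∈ univ.erase 0, c i * g i = ∑ i ∈ univ.erase 0, (c i * blowD g i + c i * g 0) :=
    sum_congr rfl fun i hi => by
      rw [blowD, if_neg (ne_of_mem_erase hi), ← mul_add, Nat.sub_add_cancel (hg (Fin.zero_le i))]
  rw [this, sum_add_distrib]
  ring

theorem sum_update_mul_blowD_add (hg : Monotone g) (c : Fin (t + 1) → ℕ) (x : ℕ) :
    ∑ i, Function.update c 0 x i * blowD g i + (∑ i, c i) * g 0 = ∑ i, c i * g i + x * g 0 := by
  have h₁ := sum_update_mul_add c (blowD g) 0 x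
  have h₂ := sum_mul_add_eq_sum_mul_blowD hg c
  rw [blowD_zero] at h₁
  linarith

theorem exists_eq_mul_add_of_le_sum (hg : Monotone g) (hc : c ∈ Fac g n) {m : ℕ}
    (hm : m ≤ ∑ i, c i) : ∃ v ∈ Sg (blowD g), n = m * g 0 + v := by
  obtain ⟨k, hk⟩ := Nat.exists_eq_add_of_le hm
  refine ⟨_, ⟨Function.update c 0 k, rfl⟩, ?_⟩
  have := sum_update_mul_blowD_add hg c k
  rw [hc, hk] at this
  linarith

theorem update_zero_mem_Fac_adj (hg : Monotone g) (hc : c ∈ Fac g n)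
    (hlen : ∑ i, c i = ordOf g n) : Function.update c 0 0 ∈ Fac (blowD g) (adj g n) := by
  have := sum_update_mul_blowD_add hg c 0
  rw [hc, hlen] at this
  show _ = n - ordOf g n * g 0
  omega

theorem ordOf_mul_add_adj (hg : Monotone g) (he : 0 < g 0) (hn : n ∈ Sg g) :
    ordOf g n * g 0 + adj g n = n := by
  obtain ⟨c, hc, hlen⟩ := exists_mem_Fac_sum_eq_ordOf (pos_of_monotone hg he) hn
  have := sum_update_mul_blowD_add hg c 0
  rw [hc, hlen] at this
  simp only [adj]
  omega

theorem adj_mem_Ap (hg : Monotone g) (he : 0 < g 0) (hadd : IsAdditive g) (hn : n ∈ Sg g) :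
    adj g n ∈ Ap (blowD g) (g 0) := by
  have hpos := pos_of_monotone hg he
  obtain ⟨c, hc, hlen⟩ := exists_mem_Fac_sum_eq_ordOf hpos hn
  refine ⟨⟨_, update_zero_mem_Fac_adj hg hc hlen⟩, ?_⟩
  rintro ⟨v, ⟨b, hb⟩, hv⟩
  -- read over `g`, `b` factors `v + (∑ b - b 0) e`; topping it up with `ordOf g n + 1 + b 0`
  -- copies of `e` gives a factorization of `n + (∑ b) e` longer than its order
  have hlong : b + Pi.single 0 (ordOf g n + 1 + b 0) ∈ Fac g (n + (∑ i, b i) * g 0) := by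
    have h₁ := sum_add_single_mul b g 0 (ordOf g n + 1 + b 0)
    have h₂ := sum_mul_add_eq_sum_mul_blowD hg b
    have h₃ := ordOf_mul_add_adj hg he hn
    rw [hb] at h₂
    show _ = _
    nlinarith
  have := sum_le_ordOf hpos hlong
  simp only [ordOf_add_mul hadd hn, Pi.add_apply, sum_add_distrib, sum_pi_single', mem_univ,
    if_true] at this
  omega

theorem dmaxEl_le_denum_adj_add (hg : Monotone g) (hD : ∀ i, 0 < blowD g i) {z : ℕ}
    (hz : z ∈ Sg (blowD g)) : dmaxEl g n ≤ denum (blowD g) (adj g n + z) := by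
  obtain ⟨b, hb⟩ := hz
  refine Set.ncard_le_ncard_of_injOn (fun c => Function.update c 0 0 + b) ?_ ?_ (finite_Fac hD _)
  · rintro c ⟨hc, hlen⟩
    have := update_zero_mem_Fac_adj hg hc hlen
    show ∑ i, (Function.update c 0 0 i + b i) * blowD g i = _
    simp only [add_mul, sum_add_distrib]
    rw [this, hb]
  · rintro c ⟨-, hc⟩ c' ⟨-, hc'⟩ h
    have h₀ := sum_update_mul_add c (fun _ => 1) 0 0
    have h₀' := sum_update_mul_add c' (fun _ => 1) 0 0
    have hupd : Function.update c 0 0 = Function.update c' 0 0 := add_right_cancel h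
    simp only [mul_one, zero_add, hupd] at h₀ h₀'
    funext i
    rcases eq_or_ne i 0 with rfl | hi
    · omega
    · simpa [hi] using congrFun hupd i

theorem add_single_mem_Fac_of_mem_Ap (hg : StrictMono g) (he : 0 < g 0)
    (hw : w ∈ Ap (blowD g) (g 0)) (hb : b ∈ Fac (blowD g) w) :
    b + Pi.single 0 (w - ∑ i, b i) ∈ Fac g (w * g 0 + w) ∧
      ∑ i, (b + Pi.single 0 (w - ∑ i, b i) : Fin (t + 1) → ℕ) i = w := by
  have hb0 : b 0 = 0 := eq_zero_of_mem_Ap (blowD_zero g ▸ hw) hb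
  have hlen := sum_le_of_mem_Fac (blowD_pos hg he) hb
  have h₁ := sum_add_single_mul b g 0 (w - ∑ i, b i)
  have h₂ := sum_mul_add_eq_sum_mul_blowD hg.monotone b
  rw [hb, hb0] at h₂
  refine ⟨?_, ?_⟩
  · obtain ⟨k, rfl⟩ := Nat.exists_eq_add_of_le hlen
    show _ = _
    rw [h₁, Nat.add_sub_cancel_left]
    linarith
  · simp only [Pi.add_apply, sum_add_distrib, sum_pi_single', mem_univ, if_true]
    omega

theorem ordOf_mul_add_self_of_mem_Ap (hg : StrictMono g) (he : 0 < g 0)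
    (hw : w ∈ Ap (blowD g) (g 0)) : ordOf g (w * g 0 + w) = w := by
  have hpos := pos_of_monotone hg.monotone he
  obtain ⟨b, hb⟩ := hw.1
  obtain ⟨hlift, hliftlen⟩ := add_single_mem_Fac_of_mem_Ap hg he hw hb
  refine le_antisymm ?_ (hliftlen.ge.trans (sum_le_ordOf hpos hlift))
  by_contra! hlt
  obtain ⟨c, hc, hlen⟩ := exists_mem_Fac_sum_eq_ordOf hpos ⟨_, hlift⟩
  obtain ⟨v, hv, hwv⟩ := exists_eq_mul_add_of_le_sum hg.monotone hc (hlen ▸ hlt)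
  exact hw.2 ⟨v, hv, by rw [Nat.succ_mul] at hwv; omega⟩

theorem denum_le_dmaxEl_of_mem_Ap (hg : StrictMono g) (he : 0 < g 0)
    (hw : w ∈ Ap (blowD g) (g 0)) : denum (blowD g) w ≤ dmaxEl g (w * g 0 + w) := by
  refine Set.ncard_le_ncard_of_injOn (fun b => b + Pi.single 0 (w - ∑ i, b i)) ?_ ?_
    ((finite_Fac (pos_of_monotone hg.monotone he) _).subset fun _ hc => hc.1)
  · intro b hb
    obtain ⟨hlift, hliftlen⟩ := add_single_mem_Fac_of_mem_Ap hg he hw hb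
    exact ⟨hlift, by rw [hliftlen, ordOf_mul_add_self_of_mem_Ap hg he hw]⟩
  · intro b hb b' hb' h
    have hw0 := blowD_zero g ▸ hw
    funext i
    rcases eq_or_ne i 0 with rfl | hi
    · rw [eq_zero_of_mem_Ap hw0 hb, eq_zero_of_mem_Ap hw0 hb']
    · simpa [hi] using congrFun h i

end Blowup

theorem Symm.zmem_frob_add_sub {T : Set ℕ} (hT : Symm T) {u w : ℕ} (hw : w ∈ ApS T u) :
    ZMem T (Frob T + u - w) := by
  refine (hT (Frob T + u - w) ((w : ℤ) - u) (by ring)).mpr fun ⟨h₀, hmem⟩ => hw.2 ⟨_, hmem, ?_⟩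
  omega

theorem Symm.zmem_ApS_frob_add {T : Set ℕ} (hT : Symm T) (h₀ : 0 ∈ T) {u : ℕ} (hu : 0 < u) :
    ZMem (ApS T u) (Frob T + u) := by
  have hfrob : ¬ ZMem T (Frob T) :=
    fun h => (hT _ 0 (add_zero _)).mp h ⟨le_rfl, h₀⟩
  obtain ⟨hnonneg, hmem⟩ : ZMem T (Frob T + u) :=
    (hT _ (-u) (by ring)).mpr fun ⟨h, _⟩ => by omega
  refine ⟨hnonneg, hmem, fun ⟨v, hv, hvu⟩ => hfrob ⟨by omega, ?_⟩⟩
  rwa [show (Frob T).toNat = v by omega]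

/-- Corollary 4.10: if `S` is additive with symmetric blowup `B`, then
`d_max(S) = d(F(B) + e; D)`. -/
theorem stmt14 {t : ℕ} (g : Fin (t + 1) → ℕ) (hS : IsNumSgp g) (hadd : IsAdditive g)
    (hsym : Symm (Sg (blowD g))) :
    dmax g = denum (blowD g) (Frob (Sg (blowD g)) + g 0).toNat := by
  have hmono := hS.mono.monotone
  obtain ⟨-, hAp⟩ := hsym.zmem_ApS_frob_add (zero_mem_Sg _) hS.pos
  set w := (Frob (Sg (blowD g)) + g 0).toNat
  have hle : ∀ n ∈ Sg g, dmaxEl g n ≤ denum (blowD g) w := by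
    intro n hn
    obtain ⟨hz₀, hz⟩ := hsym.zmem_frob_add_sub (adj_mem_Ap hmono hS.pos hadd hn)
    convert dmaxEl_le_denum_adj_add hmono (blowD_pos hS.mono hS.pos) hz using 2
    omega
  obtain ⟨b, hb⟩ := hAp.1
  have hn₀ : w * g 0 + w ∈ Sg g := ⟨_, (add_single_mem_Fac_of_mem_Ap hS.mono hS.pos hAp hb).1⟩
  have hgreatest : IsGreatest {m | ∃ n ∈ Sg g, dmaxEl g n = m} (denum (blowD g) w) :=
    ⟨⟨_, hn₀, (hle _ hn₀).antisymm (denum_le_dmaxEl_of_mem_Ap hS.mono hS.pos hAp)⟩,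
      by rintro _ ⟨n, hn, rfl⟩; exact hle n hn⟩
  exact hgreatest.csSup_eq
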